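/- arXiv:2304.14760 — 7 statements merged into one kernel-verified Lean document; each statement's English description precedes it below -/
import Mathlib

section
/- For a variable X with states x₁,…,xₙ and formula Δ, the formula ⊓xᵢ·Δ is equivalent to (Δ|xᵢ) ∧ ⋀_{j≠i} (ℓⱼ ∨ (Δ|xⱼ)), where ℓⱼ is the X-literal {x₁,…,xₙ}∖{xⱼ}. -/
open scoped Classical

/-- Formulas over finite-domain variables: each variable `X : V` has domain `D X`.
A literal of `X` is (intended to be) a nonempty proper subset of `D X`'s states. -/
inductive Form (V : Type) (D : V → Type) : Type where
  | top : Form V D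
  | bot : Form V D
  | lit : (X : V) → Set (D X) → Form V D
  | neg : Form V D → Form V D
  | and : Form V D → Form V D → Form V D
  | or : Form V D → Form V D → Form V D

namespace Form

variable {V : Type} {D : V → Type}

/-- Satisfaction of a formula by a world. -/
def sat (w : ∀ X, D X) : Form V D → Prop
  | top => True
  | bot => False
  | lit X s => w X ∈ s
  | neg φ => ¬ sat w φ
  | and φ ψ => sat w φ ∧ sat w ψ
  | or φ ψ => sat w φ ∨ sat w ψ

/-- Conditioning `Δ|x` of a formula on state `x` of variable `X`: each `X`-literal
`ℓ` is replaced by `⊤` if `x ∈ ℓ` and by `⊥` otherwise. -/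
noncomputable def cond (X : V) (x : D X) : Form V D → Form V D
  | top => top
  | bot => bot
  | lit Y s => if h : X = Y then (if h ▸ x ∈ s then top else bot) else lit Y s
  | neg φ => neg (cond X x φ)
  | and φ ψ => and (cond X x φ) (cond X x ψ)
  | or φ ψ => or (cond X x φ) (cond X x ψ)

/-- The selection operator `⊓x·Δ := (Δ|x) ∧ Δ`. -/
noncomputable def sel (X : V) (x : D X) (Δ : Form V D) : Form V D :=
  and (cond X x Δ) Δ

/-- Logical equivalence of formulas (same models). -/
def equiv (φ ψ : Form V D) : Prop := ∀ w, sat w φ ↔ sat w ψ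

/-- Variable `X` occurs (appears) in the formula. -/
def occurs (X : V) : Form V D → Prop
  | top => False
  | bot => False
  | lit Y _ => Y = X
  | neg φ => occurs X φ
  | and φ ψ => occurs X φ ∨ occurs X ψ
  | or φ ψ => occurs X φ ∨ occurs X ψ

/-- NNF: negation-free, and every literal is a nonempty proper subset of states. -/
def isNNF : Form V D → Prop
  | top => True
  | bot => True
  | lit _ s => s.Nonempty ∧ s ≠ Set.univ
  | neg _ => False
  | and φ ψ => isNNF φ ∧ isNNF ψ
  | or φ ψ => isNNF φ ∧ isNNF ψ

/-- The `X`-literal `s` occurs in the formula. -/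
def litOccurs (X : V) (s : Set (D X)) : Form V D → Prop
  | top => False
  | bot => False
  | lit Y t => ∃ h : Y = X, h ▸ t = s
  | neg φ => litOccurs X s φ
  | and φ ψ => litOccurs X s φ ∨ litOccurs X s ψ
  | or φ ψ => litOccurs X s φ ∨ litOccurs X s ψ

/-- Every literal in the formula is implied by the instance `I`
(i.e., contains `I`'s state of its variable). -/
def litsImp (I : ∀ X, D X) : Form V D → Prop
  | top => True
  | bot => True
  | lit X s => I X ∈ s
  | neg φ => litsImp I φ
  | and φ ψ => litsImp I φ ∧ litsImp I ψ
  | or φ ψ => litsImp I φ ∧ litsImp I ψ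

/-- Iterated selection `⊓` over a list of variables, using states from `v`. -/
noncomputable def selList (v : ∀ X, D X) : List V → Form V D → Form V D
  | [], Δ => Δ
  | X :: L, Δ => sel X (v X) (selList v L Δ)

/-- The general reason `⊓I·Δ`: selection applied for all states of instance `I`. -/
noncomputable def selAll [Fintype V] (I : ∀ X, D X) (Δ : Form V D) : Form V D :=
  selList I (Finset.univ : Finset V).toList Δ

noncomputable def listAnd : List (Form V D) → Form V D
  | [] => top
  | φ :: L => and φ (listAnd L)

/-- Universal literal quantification `∀x·Δ := (Δ|x) ∧ ⋀_{y ≠ x} (x ∨ Δ|y)`. -/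
noncomputable def uq (X : V) [Fintype (D X)] (x : D X) (Δ : Form V D) : Form V D :=
  letI : DecidableEq (D X) := fun _ _ => Classical.propDecidable _
  and (cond X x Δ)
    (listAnd ((((Finset.univ : Finset (D X)).erase x).toList).map
      (fun y => or (lit X ({x} : Set (D X))) (cond X y Δ))))

/-- Iterated universal literal quantification over a list of variables. -/
noncomputable def uqList [∀ X, Fintype (D X)] (v : ∀ X, D X) : List V → Form V D → Form V D
  | [], Δ => Δ
  | X :: L, Δ => uq X (v X) (uqList v L Δ)

/-- The complete reason `∀I·Δ`. -/
noncomputable def uqAll [Fintype V] [∀ X, Fintype (D X)] (I : ∀ X, D X) (Δ : Form V D) :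
    Form V D :=
  uqList I (Finset.univ : Finset V).toList Δ

end Form

/-- A term: a conjunction of literals over distinct variables. Variable `X` is
mentioned iff `lits X ≠ univ`; each literal is nonempty (terms are consistent). -/
structure MvTerm (V : Type) (D : V → Type) : Type where
  lits : ∀ X, Set (D X)
  nonempty : ∀ X, (lits X).Nonempty

/-- A clause: a disjunction of literals over distinct variables. Variable `X` is
mentioned iff `lits X ≠ ∅`; each literal is proper (clauses are never valid). -/
structure MvClause (V : Type) (D : V → Type) : Type where
  lits : ∀ X, Set (D X)
  proper : ∀ X, lits X ≠ Set.univ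

namespace MvTerm

variable {V : Type} {D : V → Type}

def tsat (w : ∀ X, D X) (τ : MvTerm V D) : Prop := ∀ X, w X ∈ τ.lits X

def vars (τ : MvTerm V D) : Set V := {X | τ.lits X ≠ Set.univ}

/-- A simple term assigns a single state to each of its variables. -/
def simple (τ : MvTerm V D) : Prop :=
  ∀ X, τ.lits X ≠ Set.univ → ∃ x, τ.lits X = ({x} : Set (D X))

end MvTerm

namespace MvClause

variable {V : Type} {D : V → Type}

def csat (w : ∀ X, D X) (σ : MvClause V D) : Prop := ∃ X, w X ∈ σ.lits X

def vars (σ : MvClause V D) : Set V := {X | σ.lits X ≠ (∅ : Set (D X))}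

/-- A simple clause: all its literals are single states. -/
def simple (σ : MvClause V D) : Prop :=
  ∀ X, σ.lits X ≠ (∅ : Set (D X)) → ∃ x, σ.lits X = ({x} : Set (D X))

end MvClause

section PrimeDefs

variable {V : Type} {D : V → Type}

def termImp (τ τ' : MvTerm V D) : Prop := ∀ w, τ.tsat w → τ'.tsat w

def clauseImp (σ σ' : MvClause V D) : Prop := ∀ w, σ.csat w → σ'.csat w

/-- A prime implicant of the set of worlds `M`: a ⊨-maximal term implying `M`. -/
def isPrimeImplicantOf (M : (∀ X, D X) → Prop) (τ : MvTerm V D) : Prop :=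
  (∀ w, τ.tsat w → M w) ∧
  ∀ τ' : MvTerm V D, (∀ w, τ'.tsat w → M w) → termImp τ τ' → τ' = τ

/-- A prime implicate of the set of worlds `M`: a ⊨-minimal clause implied by `M`. -/
def isPrimeImplicateOf (M : (∀ X, D X) → Prop) (σ : MvClause V D) : Prop :=
  (∀ w, M w → σ.csat w) ∧
  ∀ σ' : MvClause V D, (∀ w, M w → σ'.csat w) → clauseImp σ' σ → σ' = σ

/-- Remove subsumed terms: delete any term strictly implied by another in the set. -/
def removeSubsumedT (S : Set (MvTerm V D)) : Set (MvTerm V D) :=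
  {τ ∈ S | ¬ ∃ τ' ∈ S, τ' ≠ τ ∧ termImp τ τ'}

/-- Remove subsumed clauses: delete any clause strictly implying another in the set. -/
def removeSubsumedC (S : Set (MvClause V D)) : Set (MvClause V D) :=
  {σ ∈ S | ¬ ∃ σ' ∈ S, σ' ≠ σ ∧ clauseImp σ' σ}

end PrimeDefs

theorem sat_cond_self {V : Type} {D : V → Type} (X : V) (w : ∀ Y, D Y)
    (φ : Form V D) : Form.sat w (Form.cond X (w X) φ) ↔ Form.sat w φ := by
  induction φ with
  | top => simp [Form.cond, Form.sat]
  | bot => simp [Form.cond, Form.sat]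
  | lit Y s =>
    simp only [Form.cond]
    by_cases h : X = Y
    · subst h
      by_cases hs : w X ∈ s <;> simp [hs, Form.sat]
    · simp [h]
  | neg φ ih => simp [Form.cond, Form.sat, ih]
  | and φ ψ ih1 ih2 => simp [Form.cond, Form.sat, ih1, ih2]
  | or φ ψ ih1 ih2 => simp [Form.cond, Form.sat, ih1, ih2]

theorem sat_listAnd {V : Type} {D : V → Type} (w : ∀ Y, D Y)
    (L : List (Form V D)) : Form.sat w (Form.listAnd L) ↔ ∀ φ ∈ L, Form.sat w φ := by
  induction L with
  | nil => simp [Form.listAnd, Form.sat]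
  | cons φ L ih => simp [Form.listAnd, Form.sat, ih]

/-- `⊓xᵢ·Δ ≡ (Δ|xᵢ) ∧ ⋀_{j≠i} (ℓⱼ ∨ (Δ|xⱼ))`, where `ℓⱼ` is the
`X`-literal consisting of all states of `X` except `xⱼ`. -/
theorem selection_alternative {V : Type} {D : V → Type} (X : V)
    [Fintype (D X)] [DecidableEq (D X)] (xi : D X) (Δ : Form V D) :
    Form.equiv (Form.sel X xi Δ)
      (Form.and (Form.cond X xi Δ)
        (Form.listAnd ((((Finset.univ : Finset (D X)).erase xi).toList).map
          (fun xj => Form.or (Form.lit X (({xj} : Set (D X))ᶜ)) (Form.cond X xj Δ))))) := by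
  intro w
  simp only [Form.sel, Form.sat, sat_listAnd, List.mem_map, Finset.mem_toList,
    Finset.mem_erase, Finset.mem_univ, and_true]
  constructor
  · rintro ⟨h1, h2⟩
    refine ⟨h1, ?_⟩
    rintro φ ⟨xj, hne, rfl⟩
    simp only [Form.sat]
    by_cases hw : w X = xj
    · right; rw [← hw]; exact (sat_cond_self X w Δ).mpr h2
    · left; exact hw
  · rintro ⟨h1, h2⟩
    refine ⟨h1, ?_⟩
    rw [← sat_cond_self X w Δ]
    by_cases hw : w X = xi
    · rw [hw]; exact h1
    · have := h2 _ ⟨w X, hw, rfl⟩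
      simp only [Form.sat, Set.mem_compl_iff, Set.mem_singleton_iff, not_true,
        false_or] at this
      exact this
end

section
/- If an instance I satisfies formula Δ, then I ⊨ ∀I·Δ ⊨ ⊓I·Δ ⊨ Δ, where ∀ is universal literal quantification and ⊓ is the selection operator applied to all states of I. Moreover, if I does not satisfy Δ, then both ∀I·Δ and ⊓I·Δ are unsatisfiable. -/
open scoped Classical

/-!
Conditioning on `x` is evaluation at the world with `X` reset to `x` (`sat_cond`). Hence a model
`w` of `∀x·Δ` satisfies `Δ` itself (instantiate `y := w X`) and so `⊓x·Δ`; and each selection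
`⊓I X` lets one reset `X` to `I X` in a model, so from any model of `⊓I·Δ` one reaches `I`
itself as a model of `Δ`.
-/

namespace Form

variable {V : Type} {D : V → Type}

theorem sat_cond (w : ∀ X, D X) (X : V) (x : D X) (Δ : Form V D) :
    sat w (cond X x Δ) ↔ sat (Function.update w X x) Δ := by
  induction Δ with
  | top | bot => simp [cond, sat]
  | lit Y s =>
    by_cases hXY : X = Y
    · subst hXY
      by_cases hx : x ∈ s <;> simp [cond, sat, hx]
    · simp [cond, sat, hXY, Function.update_of_ne (Ne.symm hXY)]
  | neg φ ih => simp [cond, sat, ih]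
  | and φ ψ ihφ ihψ | or φ ψ ihφ ihψ => simp [cond, sat, ihφ, ihψ]

theorem sat_listAnd (w : ∀ X, D X) (L : List (Form V D)) :
    sat w (listAnd L) ↔ ∀ φ ∈ L, sat w φ := by
  induction L with
  | nil => simp [listAnd, sat]
  | cons φ L ih => simp [listAnd, sat, ih]

theorem sat_sel (w : ∀ X, D X) (X : V) (x : D X) (Δ : Form V D) :
    sat w (sel X x Δ) ↔ sat (Function.update w X x) Δ ∧ sat w Δ := by
  rw [sel, sat, sat_cond]

theorem sat_uq [∀ X, Fintype (D X)] (w : ∀ X, D X) (X : V) (x : D X) (Δ : Form V D) :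
    sat w (uq X x Δ) ↔
      sat (Function.update w X x) Δ ∧ ∀ y ≠ x, w X = x ∨ sat (Function.update w X y) Δ := by
  simp [uq, sat, sat_cond, sat_listAnd]

theorem sat_sel_of_sat_uq [∀ X, Fintype (D X)] {w : ∀ X, D X} {X : V} {x : D X}
    {Δ : Form V D} (h : sat w (uq X x Δ)) : sat w (sel X x Δ) := by
  obtain ⟨hx, hy⟩ := (sat_uq w X x Δ).1 h
  refine (sat_sel w X x Δ).2 ⟨hx, ?_⟩
  by_cases hwX : w X = x
  · rwa [← hwX, Function.update_eq_self] at hx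
  · simpa [hwX] using hy (w X) hwX

theorem sat_sel_mono {Δ Δ' : Form V D} (h : ∀ w, sat w Δ → sat w Δ') (X : V) (x : D X)
    {w : ∀ X, D X} (hw : sat w (sel X x Δ)) : sat w (sel X x Δ') := by
  rw [sat_sel] at hw ⊢
  exact ⟨h _ hw.1, h _ hw.2⟩

theorem sat_self_uqList [∀ X, Fintype (D X)] {I : ∀ X, D X} {Δ : Form V D} (hI : sat I Δ)
    (L : List V) : sat I (uqList I L Δ) := by
  induction L with
  | nil => exact hI
  | cons X L ih =>
    rw [uqList, sat_uq, Function.update_eq_self]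
    exact ⟨ih, fun _ _ => Or.inl rfl⟩

theorem sat_selList_of_sat_uqList [∀ X, Fintype (D X)] (v : ∀ X, D X) (L : List V)
    (Δ : Form V D) {w : ∀ X, D X} (hw : sat w (uqList v L Δ)) : sat w (selList v L Δ) := by
  induction L generalizing w with
  | nil => exact hw
  | cons X L ih => exact sat_sel_mono (fun _ => ih) X (v X) (sat_sel_of_sat_uq hw)

theorem sat_of_sat_selList (v : ∀ X, D X) (L : List V) (Δ : Form V D) {w : ∀ X, D X}
    (hw : sat w (selList v L Δ)) : sat w Δ := by
  induction L with
  | nil => exact hw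
  | cons X L ih => exact ih ((sat_sel w X (v X) _).1 hw).2

theorem sat_piecewise_of_sat_selList (v : ∀ X, D X) (L : List V) (Δ : Form V D)
    {w : ∀ X, D X} (hw : sat w (selList v L Δ)) : sat ({Y | Y ∈ L}.piecewise v w) Δ := by
  induction L generalizing w with
  | nil =>
    rw [selList] at hw
    convert hw using 1
    funext Y
    simp [Set.piecewise]
  | cons X L ih =>
    have hupd := ih ((sat_sel w X (v X) _).1 hw).1
    convert hupd using 1
    funext Y
    by_cases hYX : Y = X
    · subst hYX; simp [Set.piecewise]
    · simp [Set.piecewise, hYX]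

theorem sat_of_sat_selAll [Fintype V] (I : ∀ X, D X) (Δ : Form V D) {w : ∀ X, D X}
    (hw : sat w (selAll I Δ)) : sat I Δ := by
  convert sat_piecewise_of_sat_selList I _ Δ hw using 1
  funext Y
  simp [Set.piecewise]

end Form

/-- if instance `I` satisfies `Δ` then
`I ⊨ ∀I·Δ ⊨ ⊓I·Δ ⊨ Δ`; and if `I` does not satisfy `Δ`, then both `∀I·Δ` and
`⊓I·Δ` are unsatisfiable. -/
theorem complete_general_reason_chain {V : Type} {D : V → Type}
    [Fintype V] [∀ X, Fintype (D X)] (Δ : Form V D) (I : ∀ X, D X) :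
    (Form.sat I Δ →
      Form.sat I (Form.uqAll I Δ) ∧
      (∀ w, Form.sat w (Form.uqAll I Δ) → Form.sat w (Form.selAll I Δ)) ∧
      (∀ w, Form.sat w (Form.selAll I Δ) → Form.sat w Δ)) ∧
    (¬ Form.sat I Δ →
      (∀ w, ¬ Form.sat w (Form.uqAll I Δ)) ∧ (∀ w, ¬ Form.sat w (Form.selAll I Δ))) := by
  have uq_sel : ∀ w, Form.sat w (Form.uqAll I Δ) → Form.sat w (Form.selAll I Δ) :=
    fun _ => Form.sat_selList_of_sat_uqList I _ Δ
  refine ⟨fun hI => ⟨Form.sat_self_uqList hI _, uq_sel, fun _ => Form.sat_of_sat_selList I _ Δ⟩,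
    fun hI => ⟨fun w hw => hI ?_, fun w hw => hI ?_⟩⟩
  · exact Form.sat_of_sat_selAll I Δ (uq_sel w hw)
  · exact Form.sat_of_sat_selAll I Δ hw
end

section
/- Restricted distribution of ⊓ over disjunction: let α be an NNF and ℓ an X-literal such that ℓ ⊨ ℓ' for every X-literal ℓ' occurring in α. Then for any state xᵢ of X, ⊓xᵢ·(α ∨ ℓ) ≡ (⊓xᵢ·α) ∨ (⊓xᵢ·ℓ). -/
open scoped Classical

lemma cond_sat_of_mem {V : Type} {D : V → Type} (X : V) (xi : D X)
    (w : ∀ X, D X) (α : Form V D) (hα : Form.isNNF α)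
    (h : ∀ s : Set (D X), Form.litOccurs X s α → w X ∈ s) :
    Form.sat w (Form.cond X xi α) → Form.sat w α := by
  induction α with
  | top => intro; trivial
  | bot => intro h'; exact h'
  | lit Y t =>
    by_cases hXY : X = Y
    · subst hXY
      have hw : w X ∈ t := h t ⟨rfl, rfl⟩
      intro _; exact hw
    · simp [Form.cond, hXY, Form.sat]
  | neg φ ih => exact absurd hα (by simp [Form.isNNF])
  | and φ ψ ihφ ihψ =>
    intro ⟨h1, h2⟩
    exact ⟨ihφ hα.1 (fun s hs => h s (Or.inl hs)) h1,
           ihψ hα.2 (fun s hs => h s (Or.inr hs)) h2⟩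
  | or φ ψ ihφ ihψ =>
    intro hh
    cases hh with
    | inl h1 => exact Or.inl (ihφ hα.1 (fun s hs => h s (Or.inl hs)) h1)
    | inr h2 => exact Or.inr (ihψ hα.2 (fun s hs => h s (Or.inr hs)) h2)

lemma sat_cond_of_mem {V : Type} {D : V → Type} (X : V) (xi : D X)
    (w : ∀ X, D X) (α : Form V D) (hα : Form.isNNF α)
    (h : ∀ s : Set (D X), Form.litOccurs X s α → xi ∈ s) :
    Form.sat w α → Form.sat w (Form.cond X xi α) := by
  induction α with
  | top => intro; trivial
  | bot => intro h'; exact h'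
  | lit Y t =>
    by_cases hXY : X = Y
    · subst hXY
      have hx : xi ∈ t := h t ⟨rfl, rfl⟩
      intro _
      simp [Form.cond, hx, Form.sat]
    · simp [Form.cond, hXY, Form.sat]
  | neg φ ih => exact absurd hα (by simp [Form.isNNF])
  | and φ ψ ihφ ihψ =>
    intro ⟨h1, h2⟩
    exact ⟨ihφ hα.1 (fun s hs => h s (Or.inl hs)) h1,
           ihψ hα.2 (fun s hs => h s (Or.inr hs)) h2⟩
  | or φ ψ ihφ ihψ =>
    intro hh
    cases hh with
    | inl h1 => exact Or.inl (ihφ hα.1 (fun s hs => h s (Or.inl hs)) h1)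
    | inr h2 => exact Or.inr (ihψ hα.2 (fun s hs => h s (Or.inr hs)) h2)

/-- restricted distribution of `⊓` over disjunction: if `α` is an
NNF and `ℓ` is an `X`-literal with `ℓ ⊨ ℓ'` (i.e. `ℓ ⊆ ℓ'`) for every `X`-literal
`ℓ'` occurring in `α`, then `⊓xᵢ·(α ∨ ℓ) ≡ (⊓xᵢ·α) ∨ (⊓xᵢ·ℓ)`. -/
theorem selection_distributes_fixated {V : Type} {D : V → Type} (X : V)
    (xi : D X) (α : Form V D) (ℓ : Set (D X))
    (hα : Form.isNNF α) (hℓ : ℓ.Nonempty ∧ ℓ ≠ Set.univ)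
    (h : ∀ s : Set (D X), Form.litOccurs X s α → ℓ ⊆ s) :
    Form.equiv (Form.sel X xi (Form.or α (Form.lit X ℓ)))
      (Form.or (Form.sel X xi α) (Form.sel X xi (Form.lit X ℓ))) := by
  intro w
  simp only [Form.sel, Form.cond, Form.sat]
  constructor
  · rintro ⟨hc | hcℓ, ha | hl⟩
    · exact Or.inl ⟨hc, ha⟩
    · -- cond α holds and w X ∈ ℓ
      exact Or.inl ⟨hc, cond_sat_of_mem X xi w α hα
        (fun s hs => h s hs hl) hc⟩
    · -- cond ℓ holds (so xi ∈ ℓ) and α holds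
      have hxi : xi ∈ ℓ := by
        by_contra hxn
        simp [Form.cond, hxn, Form.sat] at hcℓ
      exact Or.inl ⟨sat_cond_of_mem X xi w α hα
        (fun s hs => h s hs hxi) ha, ha⟩
    · exact Or.inr ⟨hcℓ, hl⟩
  · rintro (⟨hc, ha⟩ | ⟨hc, hl⟩)
    · exact ⟨Or.inl hc, Or.inl ha⟩
    · exact ⟨Or.inr hc, Or.inr hl⟩
end

section
/- Prime implicants of a conjunction: for formulas α and β over finite-domain variables, the set of prime implicants of α ∧ β equals the set obtained by taking all conjunctions τ₁ ∧ τ₂ (merged into terms) with τ₁ a prime implicant of α and τ₂ a prime implicant of β, consistent, and then removing subsumed terms. -/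
open scoped Classical

section Helpers

variable {V : Type} {D : V → Type}

private lemma occurs_finite' (φ : Form V D) : {X | Form.occurs X φ}.Finite := by
  induction φ with
  | top => simp [Form.occurs]
  | bot => simp [Form.occurs]
  | lit Y s =>
      have : {X | Form.occurs X (Form.lit Y s)} = {Y} := by
        ext Z; simp [Form.occurs, eq_comm]
      rw [this]; exact Set.finite_singleton Y
  | neg φ ih => simpa [Form.occurs] using ih
  | and φ ψ ih1 ih2 =>
      have : {X | Form.occurs X (Form.and φ ψ)} =
          {X | Form.occurs X φ} ∪ {X | Form.occurs X ψ} := rfl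
      rw [this]; exact ih1.union ih2
  | or φ ψ ih1 ih2 =>
      have : {X | Form.occurs X (Form.or φ ψ)} =
          {X | Form.occurs X φ} ∪ {X | Form.occurs X ψ} := rfl
      rw [this]; exact ih1.union ih2

private lemma sat_congr' {w w' : ∀ X, D X} (φ : Form V D)
    (h : ∀ X, Form.occurs X φ → w X = w' X) : Form.sat w φ ↔ Form.sat w' φ := by
  induction φ with
  | top => simp [Form.sat]
  | bot => simp [Form.sat]
  | lit Y s => rw [Form.sat, Form.sat, h Y rfl]
  | neg φ ih => rw [Form.sat, Form.sat, ih h]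
  | and φ ψ ih1 ih2 =>
      rw [Form.sat, Form.sat, ih1 (fun X hX => h X (Or.inl hX)),
        ih2 (fun X hX => h X (Or.inr hX))]
  | or φ ψ ih1 ih2 =>
      rw [Form.sat, Form.sat, ih1 (fun X hX => h X (Or.inl hX)),
        ih2 (fun X hX => h X (Or.inr hX))]

private lemma mvterm_ext {τ τ' : MvTerm V D} (h : τ.lits = τ'.lits) : τ = τ' := by
  cases τ; cases τ'; simpa using h

private lemma le_of_termImp {τ τ' : MvTerm V D} (h : termImp τ τ') :
    ∀ X, τ.lits X ⊆ τ'.lits X := by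
  classical
  intro X x hx
  set w : ∀ Y, D Y := Function.update (fun Y => (τ.nonempty Y).some) X x with hw
  have hts : τ.tsat w := by
    intro Y
    rcases eq_or_ne Y X with rfl | hY
    · simpa [hw] using hx
    · simpa [hw, Function.update_of_ne hY] using (τ.nonempty Y).some_mem
  have := h w hts X
  simpa [hw] using this

/-- Any implicant of `φ` is below some prime implicant of `φ`. -/
private lemma exists_prime_above (φ : Form V D) (τ : MvTerm V D)
    (hτ : ∀ w, τ.tsat w → Form.sat w φ) :
    ∃ π : MvTerm V D, isPrimeImplicantOf (fun w => Form.sat w φ) π ∧ termImp τ π := by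
  classical
  set S : Set (∀ X, Set (D X)) :=
    {f | (∀ X, τ.lits X ⊆ f X) ∧ (∀ X, ¬ Form.occurs X φ → f X = Set.univ) ∧
      ∀ w : ∀ X, D X, (∀ X, w X ∈ f X) → Form.sat w φ} with hS
  set f₀ : ∀ X, Set (D X) := fun X => if Form.occurs X φ then τ.lits X else Set.univ with hf0
  have hf₀mem : f₀ ∈ S := by
    refine ⟨fun X => ?_, fun X hX => by simp [hf0, hX], fun w hw => ?_⟩
    · by_cases hX : Form.occurs X φ <;> simp [hf0, hX]
    · -- modify w off the occurring variables to satisfy τ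
      set w' : ∀ X, D X := fun X =>
        if Form.occurs X φ then w X else (τ.nonempty X).some with hw'
      have hts : τ.tsat w' := by
        intro X
        by_cases hX : Form.occurs X φ
        · have := hw X; simp [hf0, hX] at this; simpa [hw', hX] using this
        · simpa [hw', hX] using (τ.nonempty X).some_mem
      have := hτ w' hts
      exact (sat_congr' φ (fun X hX => by simp [hw', hX])).mpr this
  have hUB : ∀ c ⊆ S, IsChain (· ≤ ·) c → ∀ y ∈ c, ∃ ub ∈ S, ∀ z ∈ c, z ≤ ub := by
    intro c hcS hchain y hyc
    refine ⟨fun X => ⋃ f ∈ c, f X, ⟨fun X => ?_, fun X hX => ?_, fun w hw => ?_⟩,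
      fun z hz => fun X => Set.subset_biUnion_of_mem (u := fun f => f X) hz⟩
    · exact ((hcS hyc).1 X).trans (Set.subset_biUnion_of_mem (u := fun f => f X) hyc)
    · exact Set.eq_univ_of_univ_subset
        (((hcS hyc).2.1 X hX) ▸ Set.subset_biUnion_of_mem (u := fun f => f X) hyc)
    · -- find a single chain member covering all occurring variables
      have key : ∀ s : Finset V, ∃ f ∈ c, ∀ X ∈ s, Form.occurs X φ → w X ∈ f X := by
        intro s
        induction s using Finset.induction with
        | empty => exact ⟨y, hyc, by simp⟩
        | @insert a s ha ih =>
            obtain ⟨f, hfc, hf⟩ := ih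
            by_cases hocc : Form.occurs a φ
            · have hwa : w a ∈ ⋃ g ∈ c, g a := hw a
              obtain ⟨g, hgc, hwg⟩ := by simpa using hwa
              rcases hchain.total hfc hgc with hle | hle
              · refine ⟨g, hgc, fun X hX _hX' => ?_⟩
                rcases Finset.mem_insert.mp hX with rfl | hX
                · exact hwg
                · exact hle X (hf X hX _hX')
              · refine ⟨f, hfc, fun X hX _hX' => ?_⟩
                rcases Finset.mem_insert.mp hX with rfl | hX
                · exact hle _ hwg
                · exact hf X hX _hX'
            · refine ⟨f, hfc, fun X hX hX' => ?_⟩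
              rcases Finset.mem_insert.mp hX with rfl | hX
              · exact absurd hX' hocc
              · exact hf X hX hX'
      obtain ⟨f, hfc, hf⟩ := key (occurs_finite' φ).toFinset
      have : ∀ X, w X ∈ f X := by
        intro X
        by_cases hX : Form.occurs X φ
        · exact hf X (by simpa using hX) hX
        · rw [(hcS hfc).2.1 X hX]; trivial
      exact (hcS hfc).2.2 w this
  obtain ⟨m, _, hmS, hmax⟩ := zorn_le_nonempty₀ S hUB f₀ hf₀mem
  obtain ⟨hm1, hm2, hm3⟩ := hmS
  refine ⟨⟨m, fun X => (τ.nonempty X).mono (hm1 X)⟩, ⟨?_, ?_⟩,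
    fun w hw X => hm1 X (hw X)⟩
  · exact fun w hw => hm3 w hw
  · intro τ' hτ' hle
    have hsub := le_of_termImp hle
    have hτ'S : τ'.lits ∈ S := by
      refine ⟨fun X => (hm1 X).trans (hsub X), fun X hX => ?_, fun w hw => hτ' w hw⟩
      · exact Set.eq_univ_of_univ_subset ((hm2 X hX) ▸ hsub X)
    have hle' : m ≤ τ'.lits := fun X => hsub X
    have := hmax hτ'S hle'
    exact mvterm_ext (le_antisymm this hle')

end Helpers

/-- the prime implicants of `α ∧ β` are obtained by conjoining
(pointwise intersecting) prime implicants of `α` with prime implicants of `β`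
(excluding inconsistent products) and removing subsumed terms. -/
theorem prime_implicants_conjunction {V : Type} {D : V → Type}
    (α β : Form V D) :
    {τ : MvTerm V D | isPrimeImplicantOf (fun w => Form.sat w (Form.and α β)) τ} =
    removeSubsumedT
      {τ : MvTerm V D | ∃ τ₁ τ₂ : MvTerm V D,
        isPrimeImplicantOf (fun w => Form.sat w α) τ₁ ∧
        isPrimeImplicantOf (fun w => Form.sat w β) τ₂ ∧
        ∀ X, τ.lits X = τ₁.lits X ∩ τ₂.lits X} := by
  classical
  set P : Set (MvTerm V D) :=
    {τ : MvTerm V D | ∃ τ₁ τ₂ : MvTerm V D,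
      isPrimeImplicantOf (fun w => Form.sat w α) τ₁ ∧
      isPrimeImplicantOf (fun w => Form.sat w β) τ₂ ∧
      ∀ X, τ.lits X = τ₁.lits X ∩ τ₂.lits X} with hP
  -- every member of P is an implicant of α ∧ β
  have hPimp : ∀ τ ∈ P, ∀ w, τ.tsat w → Form.sat w (Form.and α β) := by
    rintro τ ⟨τ₁, τ₂, h1, h2, heq⟩ w hw
    refine ⟨h1.1 w fun X => ?_, h2.1 w fun X => ?_⟩
    · exact ((heq X) ▸ hw X).1
    · exact ((heq X) ▸ hw X).2
  ext τ
  simp only [Set.mem_setOf_eq, removeSubsumedT, Set.mem_sep_iff]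
  constructor
  · rintro ⟨himp, hmax⟩
    obtain ⟨τ₁, hτ₁, hle₁⟩ := exists_prime_above α τ (fun w hw => (himp w hw).1)
    obtain ⟨τ₂, hτ₂, hle₂⟩ := exists_prime_above β τ (fun w hw => (himp w hw).2)
    have hne : ∀ X, (τ₁.lits X ∩ τ₂.lits X).Nonempty := fun X =>
      (τ.nonempty X).mono
        (Set.subset_inter (le_of_termImp hle₁ X) (le_of_termImp hle₂ X))
    set σ : MvTerm V D := ⟨fun X => τ₁.lits X ∩ τ₂.lits X, hne⟩ with hσdef
    have hσP : σ ∈ P := ⟨τ₁, τ₂, hτ₁, hτ₂, fun X => rfl⟩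
    have hτσ : termImp τ σ := fun w hw X => ⟨hle₁ w hw X, hle₂ w hw X⟩
    have hσ : σ = τ := hmax σ (hPimp σ hσP) hτσ
    refine ⟨hσ ▸ hσP, ?_⟩
    rintro ⟨τ', hτ'P, hne', himp'⟩
    exact hne' (hmax τ' (hPimp τ' hτ'P) himp')
  · rintro ⟨hτP, hnsub⟩
    have himp := hPimp τ hτP
    refine ⟨himp, ?_⟩
    intro τ' hτ' hle
    obtain ⟨π₁, hπ₁, hle₁⟩ := exists_prime_above α τ' (fun w hw => (hτ' w hw).1)
    obtain ⟨π₂, hπ₂, hle₂⟩ := exists_prime_above β τ' (fun w hw => (hτ' w hw).2)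
    have hne : ∀ X, (π₁.lits X ∩ π₂.lits X).Nonempty := fun X =>
      (τ'.nonempty X).mono
        (Set.subset_inter (le_of_termImp hle₁ X) (le_of_termImp hle₂ X))
    set σ : MvTerm V D := ⟨fun X => π₁.lits X ∩ π₂.lits X, hne⟩ with hσdef
    have hσP : σ ∈ P := ⟨π₁, π₂, hπ₁, hπ₂, fun X => rfl⟩
    have hτ'σ : termImp τ' σ := fun w hw X => ⟨hle₁ w hw X, hle₂ w hw X⟩
    have hτσ : termImp τ σ := fun w hw => hτ'σ w (hle w hw)
    have hσeq : σ = τ := by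
      by_contra hne''
      exact hnsub ⟨σ, hσP, hne'', hτσ⟩
    refine mvterm_ext (funext fun X => le_antisymm ?_ ?_)
    · exact hσeq ▸ le_of_termImp hτ'σ X
    · exact le_of_termImp hle X
end

section
/- Prime implicants of a fixated disjunction: let α ∨ β be a disjunction of NNFs satisfying the property that β is a single X-literal ℓ such that ℓ ⊨ ℓ' and ℓ ≠ ℓ' for every X-literal ℓ' occurring in α. Then the set of prime implicants of α ∨ ℓ equals the union of the prime implicants of α with {ℓ}, after removing subsumed terms. -/
open scoped Classical

/-- The term consisting of the single `X`-literal `ℓ`. -/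
noncomputable def litTerm {V : Type} {D : V → Type} [∀ Y, Nonempty (D Y)]
    (X : V) (ℓ : Set (D X)) (h : ℓ.Nonempty) : MvTerm V D where
  lits := fun Y => if hXY : X = Y then hXY ▸ ℓ else Set.univ
  nonempty := by
    intro Y
    try dsimp only
    split
    · next hXY => cases hXY; exact h
    · exact Set.univ_nonempty

/-!
Since `α` is monotone and each of its `X`-literals contains `ℓ`, an implicant of `α ∨ ℓ` either
implies `α` or implies `ℓ`. So the prime implicants of `α ∨ ℓ` lie in `S = PI(α) ∪ {ℓ}`, and every
implicant of `α ∨ ℓ` above a member of `S` is below a member of `S`: the only case needing care is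
an implicant of `α` above `ℓ`, which mentions only `X` and so lies below the largest `X`-literal
implying `α`, itself a prime implicant. For any set `S` of implicants with these two covering
properties, the prime implicants are exactly the unsubsumed members of `S`.
-/

namespace MvTerm

variable {V : Type} {D : V → Type}

theorem ext {τ τ' : MvTerm V D} (h : ∀ X, τ.lits X = τ'.lits X) : τ = τ' := by
  cases τ; cases τ'; congr; exact funext h

theorem tsat_update {τ : MvTerm V D} {w : ∀ X, D X} (hw : τ.tsat w) {Y : V} {y : D Y}
    (hy : y ∈ τ.lits Y) : τ.tsat (Function.update w Y y) := by
  intro Z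
  by_cases hZ : Z = Y
  · subst hZ; rwa [Function.update_self]
  · rw [Function.update_of_ne hZ]; exact hw Z

theorem exists_tsat_of_mem {τ : MvTerm V D} {Y : V} {y : D Y} (hy : y ∈ τ.lits Y) :
    ∃ w, τ.tsat w ∧ w Y = y :=
  ⟨_, tsat_update (fun Z => (τ.nonempty Z).some_mem) hy, Function.update_self ..⟩

end MvTerm

section Implicants

variable {V : Type} {D : V → Type}

theorem termImp_iff_subset {τ τ' : MvTerm V D} :
    termImp τ τ' ↔ ∀ Y, τ.lits Y ⊆ τ'.lits Y := by
  refine ⟨fun h Y y hy => ?_, fun h w hw Y => h Y (hw Y)⟩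
  obtain ⟨w, hw, rfl⟩ := MvTerm.exists_tsat_of_mem hy
  exact h w hw Y

theorem termImp_antisymm {τ τ' : MvTerm V D} (h : termImp τ τ') (h' : termImp τ' τ) :
    τ = τ' :=
  MvTerm.ext fun Y =>
    (termImp_iff_subset.1 h Y).antisymm (termImp_iff_subset.1 h' Y)

def IsImplicantOf (M : (∀ X, D X) → Prop) (τ : MvTerm V D) : Prop :=
  ∀ w, τ.tsat w → M w

variable {M : (∀ X, D X) → Prop} {S : Set (MvTerm V D)}

theorem setOf_isPrimeImplicantOf_subset_removeSubsumedT (hS : ∀ σ ∈ S, IsImplicantOf M σ)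
    (hPI : ∀ τ, isPrimeImplicantOf M τ → τ ∈ S) :
    {τ | isPrimeImplicantOf M τ} ⊆ removeSubsumedT S := by
  intro τ hτ
  exact ⟨hPI τ hτ, fun ⟨σ, hσS, hστ, hτσ⟩ => hστ (hτ.2 σ (hS σ hσS) hτσ)⟩

theorem removeSubsumedT_subset_setOf_isPrimeImplicantOf (hS : ∀ σ ∈ S, IsImplicantOf M σ)
    (hcover : ∀ τ ∈ S, ∀ τ', IsImplicantOf M τ' → termImp τ τ' → ∃ σ ∈ S, termImp τ' σ) :
    removeSubsumedT S ⊆ {τ | isPrimeImplicantOf M τ} := by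
  rintro τ ⟨hτS, hτmax⟩
  refine ⟨hS τ hτS, fun τ' hτ' hττ' => ?_⟩
  obtain ⟨σ, hσS, hτ'σ⟩ := hcover τ hτS τ' hτ' hττ'
  have hστ : σ = τ := by
    by_contra hne
    exact hτmax ⟨σ, hσS, hne, fun w hw => hτ'σ w (hττ' w hw)⟩
  exact termImp_antisymm (hστ ▸ hτ'σ) hττ'

end Implicants

section LitTerm

variable {V : Type} {D : V → Type} [∀ Y, Nonempty (D Y)]

@[simp]
theorem litTerm_lits_self (X : V) (s : Set (D X)) (h : s.Nonempty) :
    (litTerm X s h).lits X = s := by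
  simp [litTerm]

@[simp]
theorem litTerm_lits_of_ne {X Y : V} (s : Set (D X)) (h : s.Nonempty) (hXY : X ≠ Y) :
    (litTerm X s h).lits Y = Set.univ := by
  simp [litTerm, hXY]

theorem tsat_litTerm_iff {X : V} {s : Set (D X)} {h : s.Nonempty} {w : ∀ Y, D Y} :
    (litTerm X s h).tsat w ↔ w X ∈ s := by
  refine ⟨fun hw => by simpa using hw X, fun hw Y => ?_⟩
  by_cases hXY : X = Y
  · subst hXY; simpa using hw
  · simp [hXY]

theorem termImp_litTerm_iff {X : V} {s : Set (D X)} {h : s.Nonempty} {τ : MvTerm V D} :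
    termImp τ (litTerm X s h) ↔ τ.lits X ⊆ s := by
  rw [termImp_iff_subset]
  refine ⟨fun hτ => by simpa using hτ X, fun hτ Y => ?_⟩
  by_cases hXY : X = Y
  · subst hXY; simpa using hτ
  · simp [hXY]

theorem eq_litTerm_of_litTerm_termImp {X : V} {s : Set (D X)} {h : s.Nonempty}
    {τ : MvTerm V D} (hτ : termImp (litTerm X s h) τ) :
    τ = litTerm X (τ.lits X) (τ.nonempty X) := by
  refine MvTerm.ext fun Y => ?_
  by_cases hXY : X = Y
  · subst hXY; simp
  · simpa [hXY, Set.univ_subset_iff] using termImp_iff_subset.1 hτ Y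

def maxLit (M : (∀ Y, D Y) → Prop) (X : V) : Set (D X) :=
  {x | ∀ w, w X = x → M w}

variable {M : (∀ Y, D Y) → Prop}

theorem isImplicantOf_litTerm_iff {X : V} {s : Set (D X)} {h : s.Nonempty} :
    IsImplicantOf M (litTerm X s h) ↔ s ⊆ maxLit M X :=
  ⟨fun hM _ hx w hwx => hM w (tsat_litTerm_iff.2 (hwx ▸ hx)),
    fun hs w hw => hs (tsat_litTerm_iff.1 hw) w rfl⟩

theorem isPrimeImplicantOf_litTerm_maxLit {X : V} (h : (maxLit M X).Nonempty) :
    isPrimeImplicantOf M (litTerm X (maxLit M X) h) := by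
  refine ⟨isImplicantOf_litTerm_iff.2 subset_rfl, fun τ hτ hle => ?_⟩
  have hτX : τ = litTerm X (τ.lits X) (τ.nonempty X) := eq_litTerm_of_litTerm_termImp hle
  refine termImp_antisymm (termImp_litTerm_iff.2 ?_) hle
  rw [hτX] at hτ
  exact isImplicantOf_litTerm_iff.1 hτ

theorem exists_isPrimeImplicantOf_of_litTerm_termImp {X : V} {s : Set (D X)}
    {h : s.Nonempty} {τ : MvTerm V D} (hτ : IsImplicantOf M τ)
    (hle : termImp (litTerm X s h) τ) : ∃ σ, isPrimeImplicantOf M σ ∧ termImp τ σ := by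
  rw [eq_litTerm_of_litTerm_termImp hle, isImplicantOf_litTerm_iff] at hτ
  exact ⟨_, isPrimeImplicantOf_litTerm_maxLit ((τ.nonempty X).mono hτ),
    termImp_litTerm_iff.2 hτ⟩

end LitTerm

namespace Form

variable {V : Type} {D : V → Type}

theorem sat_mono {α : Form V D} (hα : α.isNNF) {w w' : ∀ Y, D Y}
    (hlit : ∀ Y s, α.litOccurs Y s → w Y ∈ s → w' Y ∈ s) : α.sat w → α.sat w' := by
  induction α with
  | top | bot => exact id
  | lit Y s => exact hlit Y s ⟨rfl, rfl⟩
  | neg => exact hα.elim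
  | and φ ψ ihφ ihψ =>
    exact And.imp (ihφ hα.1 fun Y s h => hlit Y s (Or.inl h))
      (ihψ hα.2 fun Y s h => hlit Y s (Or.inr h))
  | or φ ψ ihφ ihψ =>
    exact Or.imp (ihφ hα.1 fun Y s h => hlit Y s (Or.inl h))
      (ihψ hα.2 fun Y s h => hlit Y s (Or.inr h))

variable {α : Form V D} {X : V} {ℓ : Set (D X)}

theorem sat_of_sat_update (hα : α.isNNF) (hℓ : ∀ s, α.litOccurs X s → ℓ ⊆ s)
    {w : ∀ Y, D Y} (hw : w X ∈ ℓ) (y : D X) : α.sat (Function.update w X y) → α.sat w := by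
  refine sat_mono hα fun Y s hocc hmem => ?_
  by_cases hYX : Y = X
  · subst hYX; exact hℓ s hocc hw
  · rwa [Function.update_of_ne hYX] at hmem

/-- Setting `X` to a state of the term outside `ℓ` would give a model of `α`, and by
monotonicity the original counter-model of `α` would then be one too. -/
theorem lits_subset_of_isImplicantOf_or_lit (hα : α.isNNF)
    (hℓ : ∀ s, α.litOccurs X s → ℓ ⊆ s) {τ : MvTerm V D}
    (hτ : IsImplicantOf (fun w => (α.or (lit X ℓ)).sat w) τ)
    (hτα : ¬ IsImplicantOf (fun w => α.sat w) τ) : τ.lits X ⊆ ℓ := by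
  obtain ⟨w, hw, hwα⟩ : ∃ w, τ.tsat w ∧ ¬ α.sat w := by
    simpa [IsImplicantOf] using hτα
  have hwℓ : w X ∈ ℓ := (hτ w hw).resolve_left hwα
  intro y hy
  rcases hτ _ (τ.tsat_update hw hy) with hyα | hyℓ
  · exact absurd (sat_of_sat_update hα hℓ hwℓ y hyα) hwα
  · simpa [sat] using hyℓ

end Form

theorem prime_implicants_fixated_disjunction_general {V : Type} {D : V → Type}
    [∀ Y, Nonempty (D Y)] (X : V) (α : Form V D) (ℓ : Set (D X))
    (hα : Form.isNNF α) (hne : ℓ.Nonempty)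
    (h : ∀ s : Set (D X), Form.litOccurs X s α → ℓ ⊆ s ∧ ℓ ≠ s) :
    {τ : MvTerm V D |
        isPrimeImplicantOf (fun w => Form.sat w (Form.or α (Form.lit X ℓ))) τ} =
    removeSubsumedT
      ({τ : MvTerm V D | isPrimeImplicantOf (fun w => Form.sat w α) τ} ∪
        {litTerm X ℓ hne}) := by
  have hℓ s hs := (h s hs).1
  have hL : IsImplicantOf (fun w => (α.or (.lit X ℓ)).sat w) (litTerm X ℓ hne) :=
    fun _ hw => Or.inr (tsat_litTerm_iff.1 hw)
  have hS : ∀ σ ∈ {τ | isPrimeImplicantOf (fun w => α.sat w) τ} ∪ {litTerm X ℓ hne},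
      IsImplicantOf (fun w => (α.or (.lit X ℓ)).sat w) σ := by
    rintro σ (hσ | rfl)
    exacts [fun w hw => Or.inl (hσ.1 w hw), hL]
  refine (setOf_isPrimeImplicantOf_subset_removeSubsumedT hS fun τ hτ => ?_).antisymm
    (removeSubsumedT_subset_setOf_isPrimeImplicantOf hS fun τ hτS τ' hτ' hle => ?_)
  · by_cases hτα : IsImplicantOf (fun w => α.sat w) τ
    · exact Or.inl ⟨hτα, fun τ' hτ' => hτ.2 τ' fun w hw => Or.inl (hτ' w hw)⟩
    · exact Or.inr (hτ.2 _ hL (termImp_litTerm_iff.2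
        (Form.lits_subset_of_isImplicantOf_or_lit hα hℓ hτ.1 hτα))).symm
  · by_cases hτ'α : IsImplicantOf (fun w => α.sat w) τ'
    · rcases hτS with hτ | rfl
      · exact ⟨τ', Or.inl (hτ.2 τ' hτ'α hle ▸ hτ), fun _ hw => hw⟩
      · obtain ⟨σ, hσ, hτ'σ⟩ := exists_isPrimeImplicantOf_of_litTerm_termImp hτ'α hle
        exact ⟨σ, Or.inl hσ, hτ'σ⟩
    · exact ⟨_, Or.inr rfl, termImp_litTerm_iff.2
        (Form.lits_subset_of_isImplicantOf_or_lit hα hℓ hτ' hτ'α)⟩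

/-- prime implicants of a fixated disjunction `α ∨ ℓ`, where `α` is
an NNF and `ℓ` is an `X`-literal with `ℓ ⊨ ℓ'` and `ℓ ≠ ℓ'` for every `X`-literal
`ℓ'` occurring in `α`: they are the prime implicants of `α` together with `ℓ`,
after removing subsumed terms. -/
theorem prime_implicants_fixated_disjunction {V : Type} {D : V → Type}
    [∀ Y, Nonempty (D Y)] (X : V) (α : Form V D) (ℓ : Set (D X))
    (hα : Form.isNNF α) (hne : ℓ.Nonempty) (hpr : ℓ ≠ Set.univ)
    (h : ∀ s : Set (D X), Form.litOccurs X s α → ℓ ⊆ s ∧ ℓ ≠ s) :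
    {τ : MvTerm V D |
        isPrimeImplicantOf (fun w => Form.sat w (Form.or α (Form.lit X ℓ))) τ} =
    removeSubsumedT
      ({τ : MvTerm V D | isPrimeImplicantOf (fun w => Form.sat w α) τ} ∪
        {litTerm X ℓ hne}) :=
  prime_implicants_fixated_disjunction_general X α ℓ hα hne h
end

section
/- Closing a CNF over finite-domain variables under multi-valued resolution and removing subsumed clauses yields exactly the set of prime implicates of the CNF. -/
open scoped Classical

/-- Multi-valued resolution: `ρ` is the `X`-resolvent of clauses `σ₁` and `σ₂`
(whose `X`-literals must not entail one another); `ρ` being a well-formed clause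
enforces that the result is not valid. -/
def isResolvent {V : Type} {D : V → Type} (X : V)
    (σ₁ σ₂ ρ : MvClause V D) : Prop :=
  ¬ σ₁.lits X ⊆ σ₂.lits X ∧ ¬ σ₂.lits X ⊆ σ₁.lits X ∧
  ρ.lits X = σ₁.lits X ∩ σ₂.lits X ∧
  ∀ Y, Y ≠ X → ρ.lits Y = σ₁.lits Y ∪ σ₂.lits Y

/-- Closure of a set of clauses under multi-valued resolution. -/
inductive ResClosure {V : Type} {D : V → Type} (S : Set (MvClause V D)) :
    MvClause V D → Prop
  | base {σ : MvClause V D} : σ ∈ S → ResClosure S σ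
  | step {σ₁ σ₂ ρ : MvClause V D} (X : V) :
      ResClosure S σ₁ → ResClosure S σ₂ → isResolvent X σ₁ σ₂ ρ → ResClosure S ρ

section Aux

variable {V : Type} {D : V → Type}

open MvClause Set

lemma MvClause.ext' {σ σ' : MvClause V D} (h : ∀ X, σ.lits X = σ'.lits X) : σ = σ' := by
  cases σ; cases σ'; simp only [MvClause.mk.injEq]; exact funext h

lemma clauseImp_iff (σ σ' : MvClause V D) :
    clauseImp σ σ' ↔ ∀ X, σ.lits X ⊆ σ'.lits X := by
  constructor
  · intro h X x hx
    classical
    have hne : ∀ Y, ((σ'.lits Y)ᶜ).Nonempty := fun Y =>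
      Set.nonempty_compl.mpr (σ'.proper Y)
    set w : ∀ Y, D Y := Function.update (fun Y => (hne Y).choose) X x with hw
    have hwX : w X = x := Function.update_self _ _ _
    obtain ⟨Y, hY⟩ := h w ⟨X, by rwa [hwX]⟩
    by_cases hYX : Y = X
    · subst hYX; rwa [hwX] at hY
    · exfalso
      have : w Y = (hne Y).choose := Function.update_of_ne hYX _ _
      rw [this] at hY
      exact (hne Y).choose_spec hY
  · rintro h w ⟨Y, hY⟩; exact ⟨Y, h Y hY⟩

lemma resClosure_sound {S : Set (MvClause V D)} {ρ : MvClause V D}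
    (h : ResClosure S ρ) :
    ∀ w, (∀ c ∈ S, MvClause.csat w c) → MvClause.csat w ρ := by
  induction h with
  | base hc => intro w hw; exact hw _ hc
  | step X h1 h2 hres ih1 ih2 =>
    intro w hw
    obtain ⟨Y1, hY1⟩ := ih1 w hw
    obtain ⟨Y2, hY2⟩ := ih2 w hw
    obtain ⟨h1', h2', hX, hY⟩ := hres
    by_cases e1 : Y1 = X
    · by_cases e2 : Y2 = X
      · exact ⟨X, by rw [hX]; exact ⟨e1 ▸ hY1, e2 ▸ hY2⟩⟩
      · exact ⟨Y2, by rw [hY Y2 e2]; exact Or.inr hY2⟩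
    · exact ⟨Y1, by rw [hY Y1 e1]; exact Or.inl hY1⟩

/-- Either one of the two clauses already has a small `Y`-literal, or we can
resolve them on `Y`; in all cases we obtain a derivable clause whose `Y`-literal
is inside the intersection and whose other literals are inside the union. -/
lemma resClosure_combine {S : Set (MvClause V D)} (Y : V) {ρ1 ρ2 : MvClause V D}
    (h1 : ResClosure S ρ1) (h2 : ResClosure S ρ2)
    (hprop : ∀ Z, Z ≠ Y → ρ1.lits Z ∪ ρ2.lits Z ≠ Set.univ) :
    ∃ ρ, ResClosure S ρ ∧ ρ.lits Y ⊆ ρ1.lits Y ∩ ρ2.lits Y ∧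
      ∀ Z, Z ≠ Y → ρ.lits Z ⊆ ρ1.lits Z ∪ ρ2.lits Z := by
  classical
  by_cases hab : ρ1.lits Y ⊆ ρ2.lits Y
  · exact ⟨ρ1, h1, Set.subset_inter (subset_refl _) hab,
      fun Z _ => Set.subset_union_left⟩
  by_cases hba : ρ2.lits Y ⊆ ρ1.lits Y
  · exact ⟨ρ2, h2, Set.subset_inter hba (subset_refl _),
      fun Z _ => Set.subset_union_right⟩
  · refine ⟨⟨fun Z => if Z = Y then ρ1.lits Z ∩ ρ2.lits Z else ρ1.lits Z ∪ ρ2.lits Z,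
      ?_⟩, ?_, by simp, fun Z hZ => by simp [hZ]⟩
    · intro Z
      by_cases hZ : Z = Y
      · subst hZ
        simp only [if_pos rfl]
        intro hcon
        exact ρ1.proper Z (Set.eq_univ_of_univ_subset (hcon ▸ Set.inter_subset_left))
      · simpa [hZ] using hprop Z hZ
    · exact ResClosure.step Y h1 h2
        ⟨hab, hba, by simp, fun Z hZ => by simp [hZ]⟩

/-- Conditioning a clause set on `X = x`. -/
def condSet (S : Set (MvClause V D)) (X : V) (x : D X) : Set (MvClause V D) :=
  {c' | ∃ c ∈ S, x ∉ c.lits X ∧ c'.lits X = (∅ : Set (D X)) ∧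
    ∀ Y, Y ≠ X → c'.lits Y = c.lits Y}

/-- Lifting resolution derivations from the conditioned set back to `S`. -/
lemma resClosure_lift (X : V) (x : D X) (S : Set (MvClause V D))
    {ρ : MvClause V D} (h : ResClosure (condSet S X x) ρ) :
    ρ.lits X = (∅ : Set (D X)) ∧
      ∃ ρ', ResClosure S ρ' ∧ x ∉ ρ'.lits X ∧
        ∀ Y, Y ≠ X → ρ'.lits Y ⊆ ρ.lits Y := by
  induction h with
  | base hc =>
    obtain ⟨c, hcS, hx, hX, hY⟩ := hc
    exact ⟨hX, c, ResClosure.base hcS, hx, fun Y hY' => (hY Y hY').superset⟩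
  | @step σ1 σ2 ρr Y h1 h2 hres ih1 ih2 =>
    obtain ⟨hX1, ρ1', hρ1, hx1, hb1⟩ := ih1
    obtain ⟨hX2, ρ2', hρ2, hx2, hb2⟩ := ih2
    obtain ⟨hns1, hns2, hrY, hrZ⟩ := hres
    have hYX : Y ≠ X := by
      rintro rfl
      rw [hX1, hX2] at hns1
      exact hns1 (subset_refl _)
    have hprop : ∀ Z, Z ≠ Y → ρ1'.lits Z ∪ ρ2'.lits Z ≠ Set.univ := by
      intro Z hZ
      by_cases hZX : Z = X
      · subst hZX
        intro hcon
        have : x ∈ ρ1'.lits Z ∪ ρ2'.lits Z := hcon ▸ Set.mem_univ x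
        rcases this with h | h
        · exact hx1 h
        · exact hx2 h
      · intro hcon
        apply ρr.proper Z
        apply Set.eq_univ_of_univ_subset
        rw [← hcon, hrZ Z hZ]
        exact Set.union_subset_union (hb1 Z hZX) (hb2 Z hZX)
    obtain ⟨r, hr, hrY', hrZ'⟩ := resClosure_combine Y hρ1 hρ2 hprop
    refine ⟨?_, r, hr, ?_, ?_⟩
    · rw [hrZ X (Ne.symm hYX), hX1, hX2, Set.union_empty]
    · intro hxr
      rcases hrZ' X (Ne.symm hYX) hxr with h | h
      · exact hx1 h
      · exact hx2 h
    · intro Z hZX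
      by_cases hZY : Z = Y
      · subst hZY
        rw [hrY]
        exact subset_trans hrY' (Set.inter_subset_inter (hb1 Z hZX) (hb2 Z hZX))
      · rw [hrZ Z hZY]
        exact subset_trans (hrZ' Z hZY)
          (Set.union_subset_union (hb1 Z hZX) (hb2 Z hZX))

/-- Completeness of multi-valued resolution for consequence finding. -/
lemma resClosure_complete [∀ X, Fintype (D X)] (hD : ∀ Z, Nonempty (D Z)) :
    ∀ (A : Finset V) (S : Set (MvClause V D)) (σ : MvClause V D),
      (∀ c ∈ S, ∀ Y, Y ∉ A → c.lits Y = (∅ : Set (D Y))) →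
      (∀ w, (∀ c ∈ S, MvClause.csat w c) → MvClause.csat w σ) →
      ∃ ρ, ResClosure S ρ ∧ ∀ Y, ρ.lits Y ⊆ σ.lits Y := by
  classical
  intro A
  induction A using Finset.induction_on with
  | empty =>
    intro S σ hsup hent
    rcases Set.eq_empty_or_nonempty S with hS | ⟨c, hc⟩
    · exfalso
      have hne : ∀ Z, ((σ.lits Z)ᶜ).Nonempty := fun Z =>
        Set.nonempty_compl.mpr (σ.proper Z)
      obtain ⟨Y, hY⟩ := hent (fun Z => (hne Z).choose)
        (fun c hc => by rw [hS] at hc; exact absurd hc (Set.notMem_empty c))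
      exact (hne Y).choose_spec hY
    · exact ⟨c, ResClosure.base hc, fun Y => by
        rw [hsup c hc Y (Finset.notMem_empty Y)]; exact Set.empty_subset _⟩
  | @insert X A hXA ih =>
    intro S σ hsup hent
    -- Key: for each state x outside σ's X-literal, a derivable clause avoiding x at X
    have key : ∀ x : D X, x ∉ σ.lits X →
        ∃ ρ', ResClosure S ρ' ∧ x ∉ ρ'.lits X ∧
          ∀ Y, Y ≠ X → ρ'.lits Y ⊆ σ.lits Y := by
      intro x hxσ
      have hemp : ∀ Z : V, (∅ : Set (D Z)) ≠ Set.univ := fun Z h => by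
        have := hD Z
        obtain ⟨z⟩ := this
        exact absurd (h ▸ Set.mem_univ z) (Set.notMem_empty z)
      -- conditioned σ
      set σ' : MvClause V D :=
        ⟨fun Z => if Z = X then ∅ else σ.lits Z, by
          intro Z; by_cases hZ : Z = X
          · simp [hZ, hemp]
          · simpa [hZ] using σ.proper Z⟩ with hσ'
      have hσ'X : σ'.lits X = (∅ : Set (D X)) := by simp [hσ']
      have hσ'Y : ∀ Y, Y ≠ X → σ'.lits Y = σ.lits Y := fun Y hY => by simp [hσ', hY]
      -- conditioned S entails σ'
      have hent' : ∀ w, (∀ c ∈ condSet S X x, MvClause.csat w c) →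
          MvClause.csat w σ' := by
        intro w hw
        set w' := Function.update w X x with hw'
        have hw'X : w' X = x := Function.update_self _ _ _
        have hw'Y : ∀ Y, Y ≠ X → w' Y = w Y := fun Y hY =>
          Function.update_of_ne hY _ _
        have hall : ∀ c ∈ S, MvClause.csat w' c := by
          intro c hc
          by_cases hxc : x ∈ c.lits X
          · exact ⟨X, by rwa [hw'X]⟩
          · set c' : MvClause V D :=
              ⟨fun Z => if Z = X then ∅ else c.lits Z, by
                intro Z; by_cases hZ : Z = X
                · simp [hZ, hemp]
                · simpa [hZ] using c.proper Z⟩ with hc'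
            have hmem : c' ∈ condSet S X x :=
              ⟨c, hc, hxc, by simp [hc'], fun Y hY => by simp [hc', hY]⟩
            obtain ⟨Y, hY⟩ := hw _ hmem
            have hYX : Y ≠ X := by
              rintro rfl; simp [hc'] at hY
            refine ⟨Y, ?_⟩
            rw [hw'Y Y hYX]
            simpa [hc', hYX] using hY
        obtain ⟨Y, hY⟩ := hent w' hall
        have hYX : Y ≠ X := by
          rintro rfl; rw [hw'X] at hY; exact hxσ hY
        exact ⟨Y, by rw [hσ'Y Y hYX, ← hw'Y Y hYX]; exact hY⟩
      -- conditioned S is supported on A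
      have hsup' : ∀ c' ∈ condSet S X x, ∀ Y, Y ∉ A → c'.lits Y = (∅ : Set (D Y)) := by
        rintro c' ⟨c, hc, hxc, hX, hYe⟩ Y hYA
        by_cases hYX : Y = X
        · subst hYX; exact hX
        · rw [hYe Y hYX]
          exact hsup c hc Y (by simp [hYX, hYA])
      obtain ⟨ρx, hρx, hρxb⟩ := ih _ _ hsup' hent'
      obtain ⟨_, ρ', hρ', hxρ', hb'⟩ := resClosure_lift X x S hρx
      refine ⟨ρ', hρ', hxρ', fun Y hY => ?_⟩
      rw [← hσ'Y Y hY]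
      exact subset_trans (hb' Y hY) (hρxb Y)
    -- eliminate all bad states of X by repeated resolution on X
    have main : ∀ E : Finset (D X), (∀ y ∈ E, y ∉ σ.lits X) →
        ∃ ρ, ResClosure S ρ ∧ (∀ y ∈ E, y ∉ ρ.lits X) ∧
          ∀ Y, Y ≠ X → ρ.lits Y ⊆ σ.lits Y := by
      intro E
      induction E using Finset.induction_on with
      | empty =>
        intro _
        obtain ⟨x0, hx0⟩ := Set.nonempty_compl.mpr (σ.proper X)
        obtain ⟨ρ', hρ', _, hb⟩ := key x0 hx0
        exact ⟨ρ', hρ', by simp, hb⟩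
      | @insert y E hyE ihE =>
        intro hE
        obtain ⟨ρE, hρE, havoid, hbE⟩ :=
          ihE (fun z hz => hE z (Finset.mem_insert_of_mem hz))
        obtain ⟨ρy, hρy, hyρ, hby⟩ := key y (hE y (Finset.mem_insert_self y E))
        have hprop : ∀ Z, Z ≠ X → ρE.lits Z ∪ ρy.lits Z ≠ Set.univ := by
          intro Z hZ hcon
          apply σ.proper Z
          apply Set.eq_univ_of_univ_subset
          rw [← hcon]
          exact Set.union_subset (hbE Z hZ) (hby Z hZ)
        obtain ⟨r, hr, hrX, hrZ⟩ := resClosure_combine X hρE hρy hprop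
        refine ⟨r, hr, ?_, fun Z hZ =>
          subset_trans (hrZ Z hZ) (Set.union_subset (hbE Z hZ) (hby Z hZ))⟩
        intro z hz hzr
        have := hrX hzr
        rcases Finset.mem_insert.mp hz with rfl | hzE
        · exact hyρ this.2
        · exact havoid z hzE this.1
    obtain ⟨ρ, hρ, hX, hb⟩ := main ((σ.lits X)ᶜ.toFinset)
      (fun y hy => by simpa using hy)
    refine ⟨ρ, hρ, fun Y => ?_⟩
    by_cases hYX : Y = X
    · subst hYX
      intro z hz
      by_contra hzσ
      exact hX z (by simpa using hzσ) hz
    · exact hb Y hYX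

end Aux

/-- closing a CNF under multi-valued resolution and removing
subsumed clauses yields exactly the CNF's prime implicates. -/
theorem resolution_closure_prime_implicates {V : Type} {D : V → Type}
    [Fintype V] [∀ X, Fintype (D X)] (hcard : ∀ X, 1 < Fintype.card (D X))
    (S : Set (MvClause V D)) :
    removeSubsumedC {σ : MvClause V D | ResClosure S σ} =
    {σ : MvClause V D |
      isPrimeImplicateOf (fun w => ∀ c ∈ S, MvClause.csat w c) σ} := by
  classical
  have hD : ∀ Z, Nonempty (D Z) := fun Z =>
    Fintype.card_pos_iff.mp (by have := hcard Z; omega)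
  have hcomp : ∀ σ : MvClause V D,
      (∀ w, (∀ c ∈ S, MvClause.csat w c) → MvClause.csat w σ) →
      ∃ ρ, ResClosure S ρ ∧ ∀ Y, ρ.lits Y ⊆ σ.lits Y := by
    intro σ hent
    exact resClosure_complete hD (Finset.univ : Finset V) S σ
      (fun c _ Y hY => absurd (Finset.mem_univ Y) hY) hent
  ext σ
  simp only [removeSubsumedC, Set.mem_setOf_eq, Set.mem_sep_iff]
  constructor
  · rintro ⟨hσcl, hnsub⟩
    refine ⟨resClosure_sound hσcl, ?_⟩
    intro σ' hσ'ent hσ'imp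
    obtain ⟨ρ, hρcl, hρb⟩ := hcomp σ' hσ'ent
    have hρσ : clauseImp ρ σ := fun w hw => hσ'imp w ((clauseImp_iff ρ σ').mpr hρb w hw)
    have hρeq : ρ = σ := by
      by_contra hne
      exact hnsub ⟨ρ, hρcl, hne, hρσ⟩
    subst hρeq
    apply MvClause.ext'
    intro X
    exact Set.Subset.antisymm ((clauseImp_iff σ' ρ).mp hσ'imp X) (hρb X)
  · rintro ⟨hent, hmin⟩
    obtain ⟨ρ, hρcl, hρb⟩ := hcomp σ hent
    have hρσ : clauseImp ρ σ := (clauseImp_iff ρ σ).mpr hρb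
    have hρeq : ρ = σ := hmin ρ (resClosure_sound hρcl) hρσ
    subst hρeq
    refine ⟨hρcl, ?_⟩
    rintro ⟨σ', hσ'cl, hne, himp⟩
    exact hne (hmin σ' (resClosure_sound hσ'cl) himp)
end

section
/- Closing a DNF over finite-domain variables under multi-valued consensus and removing subsumed terms yields exactly the set of prime implicants of the DNF. -/
open scoped Classical

/-- Multi-valued consensus: `γ` is the `X`-consensus of terms `τ₁` and `τ₂`
(whose `X`-literals must not entail one another); `γ` being a well-formed term
enforces that the remaining conjunction is consistent. -/
def isConsensus {V : Type} {D : V → Type} (X : V)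
    (τ₁ τ₂ γ : MvTerm V D) : Prop :=
  ¬ τ₁.lits X ⊆ τ₂.lits X ∧ ¬ τ₂.lits X ⊆ τ₁.lits X ∧
  γ.lits X = τ₁.lits X ∪ τ₂.lits X ∧
  ∀ Y, Y ≠ X → γ.lits Y = τ₁.lits Y ∩ τ₂.lits Y

/-- Closure of a set of terms under multi-valued consensus. -/
inductive ConsClosure {V : Type} {D : V → Type} (S : Set (MvTerm V D)) :
    MvTerm V D → Prop
  | base {τ : MvTerm V D} : τ ∈ S → ConsClosure S τ
  | step {τ₁ τ₂ γ : MvTerm V D} (X : V) :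
      ConsClosure S τ₁ → ConsClosure S τ₂ → isConsensus X τ₁ τ₂ γ → ConsClosure S γ

/-!
Consensus is sound, so every closure term implies the DNF. Conversely, every implicant `τ` is
subsumed by a closure term: once all literals of `τ` are split into single states, `τ` picks a
world, which satisfies some term of the DNF; the closure terms obtained for the states of one
literal are then merged back by consensus. So the closure and the implicants have the same
maximal elements.
-/

namespace MvTerm

variable {V : Type} {D : V → Type}

theorem termImp_iff (τ τ' : MvTerm V D) : termImp τ τ' ↔ ∀ X, τ.lits X ⊆ τ'.lits X := by
  refine ⟨fun h X x hx => ?_, fun h w hw X => h X (hw X)⟩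
  -- test the implication on a world of `τ` that takes the state `x` at `X`
  let w := Function.update (fun Y => (τ.nonempty Y).some) X x
  have hw : τ.tsat w :=
    (Function.forall_update_iff _ fun Y y => y ∈ τ.lits Y).2
      ⟨hx, fun Y _ => (τ.nonempty Y).some_mem⟩
  simpa [w] using h w hw X

theorem termImp_antisymm {τ τ' : MvTerm V D} (h : termImp τ τ') (h' : termImp τ' τ) :
    τ = τ' :=
  ext fun X => ((termImp_iff _ _).1 h X).antisymm ((termImp_iff _ _).1 h' X)

def updateLit [DecidableEq V] (τ : MvTerm V D) (X : V) (s : Set (D X)) (hs : s.Nonempty) :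
    MvTerm V D :=
  ⟨Function.update τ.lits X s,
    (Function.forall_update_iff _ fun Y (t : Set (D Y)) => t.Nonempty).2
      ⟨hs, fun Y _ => τ.nonempty Y⟩⟩

def consensus [DecidableEq V] (τ₁ τ₂ : MvTerm V D) (X : V)
    (hne : ∀ Y ≠ X, (τ₁.lits Y ∩ τ₂.lits Y).Nonempty) : MvTerm V D :=
  ⟨Function.update (fun Y => τ₁.lits Y ∩ τ₂.lits Y) X (τ₁.lits X ∪ τ₂.lits X),
    (Function.forall_update_iff _ fun Y (t : Set (D Y)) => t.Nonempty).2
      ⟨(τ₁.nonempty X).mono Set.subset_union_left, hne⟩⟩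

theorem isConsensus_consensus [DecidableEq V] {τ₁ τ₂ : MvTerm V D} {X : V}
    (hne : ∀ Y ≠ X, (τ₁.lits Y ∩ τ₂.lits Y).Nonempty)
    (h₁₂ : ¬ τ₁.lits X ⊆ τ₂.lits X) (h₂₁ : ¬ τ₂.lits X ⊆ τ₁.lits X) :
    isConsensus X τ₁ τ₂ (consensus τ₁ τ₂ X hne) :=
  ⟨h₁₂, h₂₁, by simp [consensus], fun _ hY => by simp [consensus, Function.update_of_ne hY]⟩

end MvTerm

theorem removeSubsumedT_eq_setOf_isPrimeImplicantOf {V : Type} {D : V → Type}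
    {C : Set (MvTerm V D)} {M : (∀ X, D X) → Prop}
    (sound : ∀ γ ∈ C, ∀ w, γ.tsat w → M w)
    (complete : ∀ τ : MvTerm V D, (∀ w, τ.tsat w → M w) → ∃ γ ∈ C, termImp τ γ) :
    removeSubsumedT C = {τ | isPrimeImplicantOf M τ} := by
  ext τ
  constructor
  · rintro ⟨hτC, hmax⟩
    refine ⟨sound τ hτC, fun τ' hτ' hττ' => ?_⟩
    obtain ⟨γ, hγC, hτ'γ⟩ := complete τ' hτ'
    have hγτ : γ = τ := by
      by_contra hne
      exact hmax ⟨γ, hγC, hne, fun w hw => hτ'γ w (hττ' w hw)⟩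
    exact MvTerm.termImp_antisymm (hγτ ▸ hτ'γ) hττ'
  · rintro ⟨hτ, hmax⟩
    obtain ⟨γ, hγC, hτγ⟩ := complete τ hτ
    obtain rfl : γ = τ := hmax γ (sound γ hγC) hτγ
    exact ⟨hγC, fun ⟨τ', hτ'C, hne, hττ'⟩ => hne (hmax τ' (sound τ' hτ'C) hττ')⟩

section Closure

variable {V : Type} {D : V → Type} {S : Set (MvTerm V D)}

theorem isConsensus.tsat_or {X : V} {τ₁ τ₂ γ : MvTerm V D} (h : isConsensus X τ₁ τ₂ γ)
    {w : ∀ X, D X} (hw : γ.tsat w) : τ₁.tsat w ∨ τ₂.tsat w := by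
  obtain ⟨-, -, hX, hY⟩ := h
  have hoff : ∀ Y ≠ X, w Y ∈ τ₁.lits Y ∩ τ₂.lits Y := fun Y hYX => hY Y hYX ▸ hw Y
  have hwX : w X ∈ τ₁.lits X ∪ τ₂.lits X := hX ▸ hw X
  refine hwX.imp (fun h₁ Y => ?_) (fun h₂ Y => ?_)
  · by_cases hYX : Y = X
    · exact hYX ▸ h₁
    · exact (hoff Y hYX).1
  · by_cases hYX : Y = X
    · exact hYX ▸ h₂
    · exact (hoff Y hYX).2

theorem ConsClosure.exists_tsat {γ : MvTerm V D} (h : ConsClosure S γ) {w : ∀ X, D X}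
    (hw : γ.tsat w) : ∃ t ∈ S, t.tsat w := by
  induction h with
  | base hτ => exact ⟨_, hτ, hw⟩
  | step X _ _ hc ih₁ ih₂ => exact (hc.tsat_or hw).elim ih₁ ih₂

/-- Consensus applies unless one `X`-literal contains the other, and then that term will do. -/
theorem ConsClosure.exists_union_subset {γ₁ γ₂ : MvTerm V D} {X : V}
    (h₁ : ConsClosure S γ₁) (h₂ : ConsClosure S γ₂)
    (hne : ∀ Y ≠ X, (γ₁.lits Y ∩ γ₂.lits Y).Nonempty) :
    ∃ γ, ConsClosure S γ ∧ γ₁.lits X ∪ γ₂.lits X ⊆ γ.lits X ∧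
      ∀ Y ≠ X, γ₁.lits Y ∩ γ₂.lits Y ⊆ γ.lits Y := by
  by_cases h₁₂ : γ₁.lits X ⊆ γ₂.lits X
  · exact ⟨γ₂, h₂, Set.union_subset h₁₂ le_rfl, fun _ _ => Set.inter_subset_right⟩
  by_cases h₂₁ : γ₂.lits X ⊆ γ₁.lits X
  · exact ⟨γ₁, h₁, Set.union_subset le_rfl h₂₁, fun _ _ => Set.inter_subset_left⟩
  refine ⟨_, .step X h₁ h₂ (MvTerm.isConsensus_consensus hne h₁₂ h₂₁), ?_, fun Y hY => ?_⟩
  · simp [MvTerm.consensus]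
  · simp [MvTerm.consensus, Function.update_of_ne hY]

variable [∀ X, Fintype (D X)]

theorem ConsClosure.exists_subset_of_forall_mem {τ : MvTerm V D} {X : V}
    (h : ∀ x ∈ τ.lits X, ∃ γ, ConsClosure S γ ∧ x ∈ γ.lits X ∧
      ∀ Y ≠ X, τ.lits Y ⊆ γ.lits Y) :
    ∃ γ, ConsClosure S γ ∧ ∀ Y, τ.lits Y ⊆ γ.lits Y := by
  suffices H : ∃ γ, ConsClosure S γ ∧ τ.lits X ⊆ γ.lits X ∧ ∀ Y ≠ X, τ.lits Y ⊆ γ.lits Y by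
    obtain ⟨γ, hγ, hX, hY⟩ := H
    refine ⟨γ, hγ, fun Y => ?_⟩
    by_cases hYX : Y = X
    · exact hYX ▸ hX
    · exact hY Y hYX
  refine Set.Finite.induction_on_subset (motive := fun A _ => ∃ γ, ConsClosure S γ ∧
    A ⊆ γ.lits X ∧ ∀ Y ≠ X, τ.lits Y ⊆ γ.lits Y) _ (Set.toFinite _) ?_ ?_
  · obtain ⟨γ, hγ, -, hY⟩ := h _ (τ.nonempty X).some_mem
    exact ⟨γ, hγ, Set.empty_subset _, hY⟩
  · rintro x A hx - - ⟨γ₁, hγ₁, hA, hY₁⟩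
    obtain ⟨γ₂, hγ₂, hx₂, hY₂⟩ := h x hx
    obtain ⟨γ, hγ, hX, hY⟩ := hγ₁.exists_union_subset hγ₂ fun Y hYX =>
      (τ.nonempty Y).mono (Set.subset_inter (hY₁ Y hYX) (hY₂ Y hYX))
    refine ⟨γ, hγ, Set.insert_subset (hX (Or.inr hx₂)) ((hA.trans Set.subset_union_left).trans hX),
      fun Y hYX => (Set.subset_inter (hY₁ Y hYX) (hY₂ Y hYX)).trans (hY Y hYX)⟩

/-- The literal of each new variable of `F` is split into its states, and the closure terms
obtained for them are merged back by consensus. -/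
theorem ConsClosure.exists_subset_of_implies_of_singleton (F : Finset V) :
    ∀ τ : MvTerm V D, (∀ w, τ.tsat w → ∃ t ∈ S, t.tsat w) →
      (∀ Y ∉ F, ∃ y, τ.lits Y = {y}) → ∃ γ, ConsClosure S γ ∧ ∀ Y, τ.lits Y ⊆ γ.lits Y := by
  induction F using Finset.induction_on with
  | empty =>
    intro τ himp hsingle
    choose w hw using fun Y => hsingle Y (Finset.notMem_empty Y)
    obtain ⟨t, ht, htw⟩ := himp w fun Y => (hw Y).symm ▸ rfl
    exact ⟨t, .base ht, fun Y => (hw Y).symm ▸ Set.singleton_subset_iff.2 (htw Y)⟩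
  | insert X F _ ih =>
    intro τ himp hsingle
    refine ConsClosure.exists_subset_of_forall_mem (X := X) fun x hx => ?_
    let τx := τ.updateLit X {x} (Set.singleton_nonempty x)
    have hτx : ∀ Y, τx.lits Y ⊆ τ.lits Y :=
      (Function.forall_update_iff _ fun Y s => s ⊆ τ.lits Y).2
        ⟨Set.singleton_subset_iff.2 hx, fun _ _ => le_rfl⟩
    obtain ⟨γ, hγ, hsub⟩ := ih τx (fun w hw => himp w fun Y => hτx Y (hw Y)) fun Y hY => by
      by_cases hYX : Y = X
      · exact ⟨hYX ▸ x, by subst hYX; simp [τx, MvTerm.updateLit]⟩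
      · simpa [τx, MvTerm.updateLit, hYX] using hsingle Y (by simp [hYX, hY])
    refine ⟨γ, hγ, hsub X (by simp [τx, MvTerm.updateLit]), fun Y hYX => ?_⟩
    simpa [τx, MvTerm.updateLit, hYX] using hsub Y

theorem ConsClosure.exists_subset_of_implies [Fintype V] {τ : MvTerm V D}
    (himp : ∀ w, τ.tsat w → ∃ t ∈ S, t.tsat w) :
    ∃ γ, ConsClosure S γ ∧ ∀ Y, τ.lits Y ⊆ γ.lits Y :=
  exists_subset_of_implies_of_singleton Finset.univ τ himp fun Y hY =>
    absurd (Finset.mem_univ Y) hY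

end Closure

theorem consensus_closure_prime_implicants_general {V : Type} {D : V → Type}
    [Fintype V] [∀ X, Fintype (D X)]
    (S : Set (MvTerm V D)) :
    removeSubsumedT {τ : MvTerm V D | ConsClosure S τ} =
    {τ : MvTerm V D |
      isPrimeImplicantOf (fun w => ∃ t ∈ S, MvTerm.tsat w t) τ} :=
  removeSubsumedT_eq_setOf_isPrimeImplicantOf (fun _ hγ _ hw => hγ.exists_tsat hw)
    fun _ himp =>
      let ⟨γ, hγ, hsub⟩ := ConsClosure.exists_subset_of_implies himp
      ⟨γ, hγ, (MvTerm.termImp_iff _ _).2 hsub⟩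

/-- closing a DNF under multi-valued consensus and removing
subsumed terms yields exactly the DNF's prime implicants. -/
theorem consensus_closure_prime_implicants {V : Type} {D : V → Type}
    [Fintype V] [∀ X, Fintype (D X)] (hcard : ∀ X, 1 < Fintype.card (D X))
    (S : Set (MvTerm V D)) :
    removeSubsumedT {τ : MvTerm V D | ConsClosure S τ} =
    {τ : MvTerm V D |
      isPrimeImplicantOf (fun w => ∃ t ∈ S, MvTerm.tsat w t) τ} :=
  consensus_closure_prime_implicants_general S
end
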